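/- Let i ∈ [0, N−1] and let J′ ⊆ K_i be a nonempty set such that the (singleton) sets S_j \ S_i, j ∈ J′, are pairwise disjoint. Let m ∈ [0, N−1] be the index with S_m = (⋃_{j∈J′} (S_j \ S_i)) ∪ (S_i ∩ ⋂_{j∈J′} S_j). Then i ⪯ m; consequently, if I ⊆ [0, N−1] satisfies the Partial Order Property and i ∈ I, then m ∈ I. -/

import Mathlib

noncomputable section
open scoped Classical
open Finset

/-- The 2×2 binary matrix [[1,0],[1,1]], as an ℕ-indexed function (zero outside range). -/
def G2 (a b : ℕ) : ZMod 2 :=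
  if a = 0 ∧ b = 0 then 1
  else if a = 1 ∧ b = 0 then 1
  else if a = 1 ∧ b = 1 then 1
  else 0

/-- `G n i c` is the (i,c) entry of the n-th Kronecker power over F₂ of [[1,0],[1,1]],
for row/column indices i, c ∈ [0, 2^n − 1] (standard row-major index flattening). -/
def G : ℕ → ℕ → ℕ → ZMod 2
  | 0 => fun i c => if i = 0 ∧ c = 0 then 1 else 0
  | n + 1 => fun i c => G2 (i / 2 ^ n) (c / 2 ^ n) * G n (i % 2 ^ n) (c % 2 ^ n)

/-- Row i of the polar transform G_N (N = 2^n), as a vector of its coordinates. -/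
def g (n i : ℕ) : ℕ → ZMod 2 := fun c => G n i c

/-- S_i ⊆ [0, n−1]: the support of the binary representation of i. -/
def S (n i : ℕ) : Finset ℕ := (Finset.range n).filter fun a => i.testBit a

/-- T_i = [0, n−1] \ S_i. -/
def T (n i : ℕ) : Finset ℕ := Finset.range n \ S n i

/-- Hamming weight of a vector whose coordinates are indexed by [0, 2^n − 1]. -/
def wt (n : ℕ) (v : ℕ → ZMod 2) : ℕ :=
  ((Finset.range (2 ^ n)).filter fun c => v c ≠ 0).card

/-- The index in [0, 2^n − 1] whose binary support is the set U ⊆ [0, n−1]. -/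
def idx (U : Finset ℕ) : ℕ := ∑ a ∈ U, 2 ^ a

/-- K_i = {j ∈ [i+1, N−1] : w(g_j) ≥ w(g_i ⊕ g_j) and w(g_i ⊕ g_j) = w(g_i)}. -/
def K (n i : ℕ) : Finset ℕ :=
  (Finset.Ico (i + 1) (2 ^ n)).filter fun j =>
    wt n (g n i + g n j) ≤ wt n (g n j) ∧ wt n (g n i + g n j) = wt n (g n i)

/-- One generating step of the partial order on [0, 2^n − 1]. -/
def poStep (n i j : ℕ) : Prop :=
  i < 2 ^ n ∧ j < 2 ^ n ∧
    (S n i ⊆ S n j ∨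
      ∃ a b, a ∈ S n i ∧ b ∉ S n i ∧ a < b ∧ S n j = insert b (S n i \ {a}))

/-- The partial order ⪯: reflexive–transitive closure of the generating relation. -/
def po (n : ℕ) : ℕ → ℕ → Prop := Relation.ReflTransGen (poStep n)

/-- Partial Order Property of an information set I ⊆ [0, 2^n − 1]. -/
def POP (n : ℕ) (I : Finset ℕ) : Prop :=
  ∀ i ∈ I, ∀ j, j < 2 ^ n → po n i j → j ∈ I

/-- The code C(I): all F₂-linear combinations (i.e. subset sums) of the rows g_i, i ∈ I. -/
def codewords (n : ℕ) (I : Finset ℕ) : Finset (ℕ → ZMod 2) :=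
  I.powerset.image fun H => ∑ h ∈ H, g n h

/-- A_w(I): the number of codewords of C(I) of Hamming weight w. -/
def A (n : ℕ) (I : Finset ℕ) (w : ℕ) : ℕ :=
  ((codewords n I).filter fun v => wt n v = w).card

/-- The coset C_i(I) = {g_i ⊕ ⊕_{h∈H} g_h : H ⊆ I \ [0,i]}. -/
def coset (n : ℕ) (I : Finset ℕ) (i : ℕ) : Finset (ℕ → ZMod 2) :=
  ((I.filter fun h => i < h).powerset).image fun H => g n i + ∑ h ∈ H, g n h

/-- A_{i,w}(I): the number of vectors of Hamming weight w in the coset C_i(I). -/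
def Ai (n : ℕ) (I : Finset ℕ) (i w : ℕ) : ℕ :=
  ((coset n I i).filter fun v => wt n v = w).card

/-!
For `j ∈ K_i` the weights `w(g_i) = 2^|S_i|` and
`w(g_i ⊕ g_j) = 2^|S_i| + 2^|S_j| - 2^(|S_i ∩ S_j| + 1)` force `|S_j \ S_i| = 1` and
`|S_i \ S_j| ≤ 1`; if `S_i \ S_j = {a}` and `S_j \ S_i = {b}` then `a < b`, since `i < j`.
Sending each `a ∈ S_i \ S_m` to the `b` of some `j ∈ J'` with `a ∉ S_j` is therefore an increasing
map `S_i \ S_m → S_m \ S_i`, injective because the sets `S_j \ S_i` are disjoint. Such a map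
gives a chain of swaps `a ↦ f a` from `S_i` to `(S_i ∩ S_m) ∪ f (S_i \ S_m) ⊆ S_m`.
-/

lemma mem_S {n i a : ℕ} : a ∈ S n i ↔ a < n ∧ i.testBit a := by
  simp [S]

lemma S_subset_range (n i : ℕ) : S n i ⊆ range n :=
  filter_subset _ _

lemma testBit_idx (U : Finset ℕ) (a : ℕ) : (idx U).testBit a ↔ a ∈ U := by
  rw [← Nat.mem_bitIndices, ← List.mem_toFinset, idx, toFinset_bitIndices_sum_two_pow]

lemma idx_lt_two_pow {n : ℕ} {U : Finset ℕ} (hU : U ⊆ range n) : idx U < 2 ^ n :=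
  Nat.geomSum_lt le_rfl fun _ ha => mem_range.1 (hU ha)

lemma S_idx {n : ℕ} {U : Finset ℕ} (hU : U ⊆ range n) : S n (idx U) = U := by
  ext a
  rw [mem_S, testBit_idx]
  exact ⟨And.right, fun ha => ⟨mem_range.1 (hU ha), ha⟩⟩

lemma idx_S {n i : ℕ} (hi : i < 2 ^ n) : idx (S n i) = i := by
  refine Nat.eq_of_testBit_eq fun a => Bool.eq_iff_iff.2 ?_
  rw [testBit_idx, mem_S, and_iff_right_iff_imp]
  intro ha
  by_contra! han
  exact Nat.lt_irrefl _ ((Nat.ge_two_pow_of_testBit ha).trans_lt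
    (hi.trans_le (Nat.pow_le_pow_right two_pos han)))

lemma S_mod_two_pow (n x : ℕ) : S n (x % 2 ^ n) = S n x := by
  ext a
  simp +contextual [mem_S, Nat.testBit_mod_two_pow]

lemma S_succ (n x : ℕ) :
    S (n + 1) x = if x.testBit n then insert n (S n x) else S n x := by
  rw [S, range_add_one, filter_insert, S]

lemma S_succ_subset_S_succ_iff (n c i : ℕ) :
    S (n + 1) c ⊆ S (n + 1) i ↔ S n c ⊆ S n i ∧ (c.testBit n → i.testBit n) := by
  have hn : ∀ x, n ∉ S n x := fun x h => (mem_S.1 h).1.false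
  rw [S_succ, S_succ]
  split_ifs with hc hi hi <;>
    simp [insert_subset_iff, subset_insert_iff_of_notMem (hn _), hc, hi, hn]

lemma div_two_pow_eq_toNat_testBit {n x : ℕ} (hx : x < 2 ^ (n + 1)) :
    x / 2 ^ n = (x.testBit n).toNat := by
  have hlt : x / 2 ^ n < 2 := Nat.div_lt_of_lt_mul (by rwa [← pow_succ])
  rw [Nat.testBit_eq_decide_div_mod_eq, Nat.mod_eq_of_lt hlt]
  interval_cases x / 2 ^ n <;> rfl

lemma G_eq_ite {n i c : ℕ} (hi : i < 2 ^ n) (hc : c < 2 ^ n) :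
    G n i c = if S n c ⊆ S n i then 1 else 0 := by
  induction n generalizing i c with
  | zero =>
    obtain rfl : i = 0 := by simpa using hi
    obtain rfl : c = 0 := by simpa using hc
    simp [G, S]
  | succ k ih =>
    have hpos : 0 < 2 ^ k := Nat.two_pow_pos k
    rw [G]
    dsimp only
    rw [ih (Nat.mod_lt _ hpos) (Nat.mod_lt _ hpos), S_mod_two_pow, S_mod_two_pow,
      div_two_pow_eq_toNat_testBit hi, div_two_pow_eq_toNat_testBit hc]
    simp only [S_succ_subset_S_succ_iff]
    cases i.testBit k <;> cases c.testBit k <;> by_cases h : S k c ⊆ S k i <;> simp [G2, h]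

lemma card_filter_S_subset {n : ℕ} {W : Finset ℕ} (hW : W ⊆ range n) :
    #{c ∈ range (2 ^ n) | S n c ⊆ W} = 2 ^ #W := by
  rw [← card_powerset]
  refine card_nbij' (S n) idx (fun c hc => ?_) (fun U hU => ?_) (fun c hc => ?_) (fun U hU => ?_)
  · exact mem_powerset.2 (mem_filter.1 hc).2
  · have hUn := (mem_powerset.1 hU).trans hW
    simpa [S_idx hUn] using ⟨idx_lt_two_pow hUn, mem_powerset.1 hU⟩
  · exact idx_S (mem_range.1 (mem_filter.1 hc).1)
  · exact S_idx ((mem_powerset.1 hU).trans hW)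

lemma wt_add_add_two_mul (n : ℕ) (v w : ℕ → ZMod 2) :
    wt n (v + w) + 2 * #{c ∈ range (2 ^ n) | v c ≠ 0 ∧ w c ≠ 0} = wt n v + wt n w := by
  unfold wt
  set X := {c ∈ range (2 ^ n) | v c ≠ 0}
  set Y := {c ∈ range (2 ^ n) | w c ≠ 0}
  have hxor : ∀ x y : ZMod 2, x + y ≠ 0 ↔ (x ≠ 0 ∧ y = 0 ∨ y ≠ 0 ∧ x = 0) := by decide
  have hsymm : {c ∈ range (2 ^ n) | (v + w) c ≠ 0} = X \ Y ∪ Y \ X := by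
    ext c
    simp only [Pi.add_apply, hxor, mem_filter, mem_union, mem_sdiff, X, Y]
    tauto
  have hinter : {c ∈ range (2 ^ n) | v c ≠ 0 ∧ w c ≠ 0} = X ∩ Y := filter_and _ _ _
  have hXY := card_sdiff_add_card_inter X Y
  have hYX := card_sdiff_add_card_inter Y X
  rw [hsymm, card_union_of_disjoint disjoint_sdiff_sdiff, hinter]
  rw [inter_comm] at hYX
  omega

lemma wt_g {n i : ℕ} (hi : i < 2 ^ n) : wt n (g n i) = 2 ^ #(S n i) := by
  rw [← card_filter_S_subset (S_subset_range n i), wt]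
  refine congrArg card (filter_congr fun c hc => ?_)
  rw [g, G_eq_ite hi (mem_range.1 hc)]
  split_ifs with h <;> simp [h]

lemma wt_g_add_g {n i j : ℕ} (hi : i < 2 ^ n) (hj : j < 2 ^ n) :
    wt n (g n i + g n j) + 2 * 2 ^ #(S n i ∩ S n j) = 2 ^ #(S n i) + 2 ^ #(S n j) := by
  rw [← wt_g hi, ← wt_g hj, ← wt_add_add_two_mul,
    ← card_filter_S_subset (inter_subset_left.trans (S_subset_range n i))]
  congr 3
  refine filter_congr fun c hc => ?_
  rw [g, g, G_eq_ite hi (mem_range.1 hc), G_eq_ite hj (mem_range.1 hc), subset_inter_iff]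
  split_ifs <;> simp_all

lemma card_sdiff_of_mem_K {n i j : ℕ} (hi : i < 2 ^ n) (hj : j ∈ K n i) :
    #(S n j \ S n i) = 1 ∧ #(S n i \ S n j) ≤ 1 := by
  obtain ⟨hjn, hle, heq⟩ := (mem_filter.1 hj).imp_left (fun h => (mem_Ico.1 h).2)
  have hsum := wt_g_add_g hi hjn
  rw [wt_g hi] at heq
  rw [wt_g hjn] at hle
  have hr : #(S n i ∩ S n j) ≤ #(S n i) := card_le_card inter_subset_left
  have hq : #(S n j) = #(S n i ∩ S n j) + 1 := by
    apply Nat.pow_right_injective le_rfl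
    simp only [pow_succ]
    omega
  have hp : #(S n i) ≤ #(S n j) := (Nat.pow_le_pow_iff_right one_lt_two).1 (heq ▸ hle)
  have e1 := card_sdiff_add_card_inter (S n j) (S n i)
  have e2 := card_sdiff_add_card_inter (S n i) (S n j)
  rw [inter_comm] at e1
  omega

lemma exists_swap_of_mem_K {n i j a : ℕ} (hi : i < 2 ^ n) (hj : j ∈ K n i)
    (ha : a ∈ S n i \ S n j) : ∃ b, S n i \ S n j = {a} ∧ S n j \ S n i = {b} ∧ a < b := by
  obtain ⟨hij, hjn⟩ := mem_Ico.1 (mem_filter.1 hj).1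
  obtain ⟨hcard₁, hcard₂⟩ := card_sdiff_of_mem_K hi hj
  obtain ⟨b, hb⟩ := card_eq_one.1 hcard₁
  have haS : S n i \ S n j = {a} :=
    eq_singleton_iff_unique_mem.2 ⟨ha, fun x hx => card_le_one.1 hcard₂ x hx a ha⟩
  refine ⟨b, haS, hb, ?_⟩
  have hlt : idx (S n i) < idx (S n j) := by rw [idx_S hi, idx_S hjn]; omega
  rw [idx, idx, ← sum_sdiff_lt_sum_sdiff, haS, hb, sum_singleton, sum_singleton] at hlt
  exact (Nat.pow_lt_pow_iff_right one_lt_two).1 hlt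

lemma poStep_idx_of_subset {n : ℕ} {U V : Finset ℕ} (hV : V ⊆ range n) (hUV : U ⊆ V) :
    poStep n (idx U) (idx V) := by
  have hU := hUV.trans hV
  refine ⟨idx_lt_two_pow hU, idx_lt_two_pow hV, Or.inl ?_⟩
  rwa [S_idx hU, S_idx hV]

lemma poStep_idx_swap {n a b : ℕ} {U : Finset ℕ} (hU : U ⊆ range n) (ha : a ∈ U) (hb : b ∉ U)
    (hab : a < b) (hbn : b < n) : poStep n (idx U) (idx (insert b (U.erase a))) := by
  have hV : insert b (U.erase a) ⊆ range n :=
    insert_subset (mem_range.2 hbn) ((erase_subset a U).trans hU)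
  refine ⟨idx_lt_two_pow hU, idx_lt_two_pow hV, Or.inr ⟨a, b, ?_⟩⟩
  rw [S_idx hU, S_idx hV, sdiff_singleton_eq_erase]
  exact ⟨ha, hb, hab, rfl⟩

section IncreasingInjection

variable {n : ℕ} {U V : Finset ℕ} {f : ℕ → ℕ}

lemma po_idx_sdiff_union_image (hU : U ⊆ range n) (hV : V ⊆ range n)
    (hf : Set.InjOn f ↑(U \ V)) (hmaps : ∀ a ∈ U \ V, a < f a ∧ f a ∈ V \ U) :
    ∀ A ⊆ U \ V, po n (idx U) (idx (U \ A ∪ A.image f)) := by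
  intro A
  induction A using Finset.induction_on with
  | empty =>
    intro _
    rw [sdiff_empty, image_empty, union_empty]
    exact Relation.ReflTransGen.refl
  | insert a A haA ih =>
    intro hA
    have ha : a ∈ U \ V := hA (mem_insert_self a A)
    have hA' : A ⊆ U \ V := (subset_insert a A).trans hA
    have hfA : ∀ x ∈ A, f x ∈ V \ U := fun x hx => (hmaps x (hA' hx)).2
    have haU : a ∈ U := (mem_sdiff.1 ha).1
    have hfa := hmaps a ha
    have hW : U \ A ∪ A.image f ⊆ range n :=
      union_subset (sdiff_subset.trans hU)
        (image_subset_iff.2 fun x hx => hV (mem_sdiff.1 (hfA x hx)).1)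
    have haW : a ∈ U \ A ∪ A.image f := mem_union_left _ (mem_sdiff.2 ⟨haU, haA⟩)
    have hfaW : f a ∉ U \ A ∪ A.image f := by
      rw [mem_union, mem_sdiff, mem_image, not_or]
      refine ⟨fun h => (mem_sdiff.1 hfa.2).2 h.1, ?_⟩
      rintro ⟨x, hx, hfx⟩
      exact haA (hf (hA' hx) ha hfx ▸ hx)
    have haA_image : a ∉ A.image f := fun h => by
      obtain ⟨x, hx, rfl⟩ := mem_image.1 h
      exact (mem_sdiff.1 (hfA x hx)).2 haU
    have hnext : U \ insert a A ∪ (insert a A).image f = insert (f a) ((U \ A ∪ A.image f).erase a) := by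
      rw [sdiff_insert, image_insert, union_insert, erase_union_distrib,
        erase_eq_of_notMem haA_image]
    rw [hnext]
    exact (ih hA').tail (poStep_idx_swap hW haW hfaW hfa.1 (mem_range.1 (hV (mem_sdiff.1 hfa.2).1)))

lemma po_idx_of_injOn (hU : U ⊆ range n) (hV : V ⊆ range n)
    (hf : Set.InjOn f ↑(U \ V)) (hmaps : ∀ a ∈ U \ V, a < f a ∧ f a ∈ V \ U) :
    po n (idx U) (idx V) := by
  refine (po_idx_sdiff_union_image hU hV hf hmaps _ subset_rfl).tail
    (poStep_idx_of_subset hV (union_subset ?_ ?_))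
  · rw [sdiff_sdiff_right_self]
    exact inter_subset_right
  · exact image_subset_iff.2 fun x hx => (mem_sdiff.1 (hmaps x hx).2).1

end IncreasingInjection

lemma exists_increasing_injOn_of_subset_K {n i m : ℕ} (hi : i < 2 ^ n) {J' : Finset ℕ}
    (hJ' : J' ⊆ K n i) (hne : J'.Nonempty)
    (hdisj : ∀ j ∈ J', ∀ j' ∈ J', j ≠ j' → Disjoint (S n j \ S n i) (S n j' \ S n i))
    (hSm : S n m = (J'.biUnion fun j => S n j \ S n i) ∪ (S n i ∩ J'.inf' hne fun j => S n j)) :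
    ∃ f : ℕ → ℕ, Set.InjOn f ↑(S n i \ S n m) ∧
      ∀ a ∈ S n i \ S n m, a < f a ∧ f a ∈ S n m \ S n i := by
  have hswap : ∀ a ∈ S n i \ S n m,
      ∃ j ∈ J', ∃ b, S n i \ S n j = {a} ∧ S n j \ S n i = {b} ∧ a < b := by
    intro a ha
    rw [mem_sdiff, hSm, mem_union, mem_inter, mem_inf'] at ha
    obtain ⟨j, hj, haj⟩ : ∃ j ∈ J', a ∉ S n j := by
      by_contra! h
      exact ha.2 (Or.inr ⟨ha.1, h⟩)
    exact ⟨j, hj, exists_swap_of_mem_K hi (hJ' hj) (mem_sdiff.2 ⟨ha.1, haj⟩)⟩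
  choose! j hj f hf using hswap
  refine ⟨f, fun a ha a' ha' hfa => ?_, fun a ha => ⟨(hf a ha).2.2, ?_⟩⟩
  · have hja : j a = j a' := by
      by_contra hne'
      have := hdisj _ (hj a ha) _ (hj a' ha') hne'
      rw [(hf a ha).2.1, (hf a' ha').2.1, hfa, disjoint_self] at this
      exact singleton_ne_empty _ this
    have := (hf a ha).1
    rwa [hja, (hf a' ha').1, singleton_inj, eq_comm] at this
  · have hfa : f a ∈ S n (j a) \ S n i := by rw [(hf a ha).2.1]; exact mem_singleton_self _
    rw [hSm]
    exact mem_sdiff.2 ⟨mem_union_left _ (mem_biUnion.2 ⟨j a, hj a ha, hfa⟩), (mem_sdiff.1 hfa).2⟩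

theorem M_construction_po_general (n : ℕ) (i : ℕ) (hi : i < 2 ^ n)
    (J' : Finset ℕ) (hJ' : J' ⊆ K n i) (hne : J'.Nonempty)
    (hdisj : ∀ j ∈ J', ∀ j' ∈ J', j ≠ j' → Disjoint (S n j \ S n i) (S n j' \ S n i))
    (m : ℕ) (hm : m < 2 ^ n)
    (hSm : S n m = (J'.biUnion fun j => S n j \ S n i) ∪ (S n i ∩ J'.inf' hne fun j => S n j)) :
    po n i m ∧ ∀ I : Finset ℕ, POP n I → i ∈ I → m ∈ I := by
  obtain ⟨f, hf, hmaps⟩ := exists_increasing_injOn_of_subset_K hi hJ' hne hdisj hSm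
  have hpo : po n i m := by
    simpa only [idx_S hi, idx_S hm] using
      po_idx_of_injOn (S_subset_range n i) (S_subset_range n m) hf hmaps
  exact ⟨hpo, fun I hI hiI => hI i hiI m hm hpo⟩

/-- if J′ ⊆ K_i is nonempty with pairwise disjoint sets S_j \ S_i, and
S_m = (⋃_{j∈J′} S_j \ S_i) ∪ (S_i ∩ ⋂_{j∈J′} S_j), then i ⪯ m; consequently, if I
satisfies POP and i ∈ I then m ∈ I. -/
theorem M_construction_po (n : ℕ) (hn : 1 ≤ n) (i : ℕ) (hi : i < 2 ^ n)
    (J' : Finset ℕ) (hJ' : J' ⊆ K n i) (hne : J'.Nonempty)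
    (hdisj : ∀ j ∈ J', ∀ j' ∈ J', j ≠ j' → Disjoint (S n j \ S n i) (S n j' \ S n i))
    (m : ℕ) (hm : m < 2 ^ n)
    (hSm : S n m = (J'.biUnion fun j => S n j \ S n i) ∪ (S n i ∩ J'.inf' hne fun j => S n j)) :
    po n i m ∧ ∀ I : Finset ℕ, POP n I → i ∈ I → m ∈ I :=
  M_construction_po_general n i hi J' hJ' hne hdisj m hm hSm
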